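/- arXiv:2102.06461 — 3 statements merged into one kernel-verified Lean document; each statement's English description precedes it below -/
import Mathlib

section
/- (Case m = 1, formula T̂^{(0)}_{1,n}.) For every μ > 0, lim_{n→∞} n^μ · ( h ∑_{j=1}^{n−1} f(t + jh) + g′(t) h − I[f] ) = 0, where h = T/n. -/
/-!
Fold `f` about its pole: `F u = f (t + u) + f (t - u)`, completed by `2 g'(t)` at the multiples
of `T`. As the pole is simple, near `0` this is the symmetric difference quotient of `g`, so `F` is
smooth and `T`-periodic. Folding the principal value gives `I[f] = ½ ∫₀ᵀ F`, and folding the sum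
shows that `h ∑ f (t + j h) + g'(t) h` is half the rectangle rule `h ∑_{j<n} F (j h)`. For a smooth
periodic function the rectangle rule is exact up to `O(n⁻ᵐ)` for every `m`: summing the shifts of
`F` by multiples of `h` reduces it to a single panel of an `h`-periodic function, where `m`
integrations by parts against a Peano kernel of size `(2h)ᵐ` bound the error.
-/

open Real Filter MeasureTheory Finset Function
open scoped ContDiff Topology

lemma ne_intCast_mul_of_abs_lt {T x : ℝ} (hT : 0 < T) (hx : |x| < T) (hx0 : x ≠ 0) (k : ℤ) :
    x ≠ k * T := by
  rintro rfl
  rw [abs_mul, abs_of_pos hT, mul_lt_iff_lt_one_left hT, ← Int.cast_abs] at hx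
  obtain rfl : k = 0 := Int.abs_lt_one_iff.mp (by exact_mod_cast hx)
  simp at hx0

lemma isOpen_setOf_forall_ne_add_intCast_mul (t : ℝ) {T : ℝ} (hT : T ≠ 0) :
    IsOpen {x : ℝ | ∀ k : ℤ, x ≠ t + k * T} := by
  have hclosed : IsClosed (Set.range fun k : ℤ => t + k * T) :=
    ((Homeomorph.addLeft t).isClosedEmbedding.comp
      ((Homeomorph.mulRight₀ T hT).isClosedEmbedding.comp
        Int.isClosedEmbedding_coe_real)).isClosed_range
  convert hclosed.isOpen_compl using 1
  ext x
  simp [eq_comm]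

lemma Icc_subset_setOf_forall_ne_add_intCast_mul {t T c d : ℝ} (hT : 0 < T) (hc : t - T < c)
    (hd : d < t + T) (ht : d < t ∨ t < c) :
    Set.Icc c d ⊆ {x : ℝ | ∀ k : ℤ, x ≠ t + k * T} := fun x hx k hk => by
  refine ne_intCast_mul_of_abs_lt (x := x - t) hT
    (abs_lt.2 ⟨by linarith [hx.1], by linarith [hx.2]⟩) ?_ k (by linarith)
  rcases ht with ht | ht <;> linarith [hx.1, hx.2]

lemma Function.Periodic.iteratedDeriv {ψ : ℝ → ℝ} {c : ℝ} (hp : Periodic ψ c) (m : ℕ) :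
    Periodic (_root_.iteratedDeriv m ψ) c := fun x => by
  rw [← congrFun (iteratedDeriv_comp_add_const m ψ c) x]
  exact congrArg (_root_.iteratedDeriv m · x) (funext hp)

-- `∫ p = 0` makes the primitive of `p` vanish at both ends of `[0, h]`, which the induction in
-- `IsPeanoKernel.succ` needs.
def IsPeanoKernel (h : ℝ) (m : ℕ) (p : ℝ → ℝ) : Prop :=
  Continuous p ∧ ∫ s in 0..h, p s = 0 ∧
    ∀ ψ : ℝ → ℝ, ContDiff ℝ m ψ → Periodic ψ h →
      h * ψ 0 - ∫ s in 0..h, ψ s = ∫ s in 0..h, p s * iteratedDeriv m ψ s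

lemma isPeanoKernel_one (h : ℝ) : IsPeanoKernel h 1 fun s => s - h / 2 := by
  refine ⟨by fun_prop, by simp [intervalIntegral.integral_sub, integral_id]; ring,
    fun ψ hψ hp => ?_⟩
  beta_reduce
  have hderiv : ∀ x, HasDerivAt ψ (deriv ψ x) x :=
    fun x => (hψ.differentiable one_ne_zero x).hasDerivAt
  rw [iteratedDeriv_one, intervalIntegral.integral_mul_deriv_eq_deriv_mul
    (fun x _ => (hasDerivAt_id' x).sub_const _) (fun x _ => hderiv x) intervalIntegrable_const
    ((hψ.continuous_deriv le_rfl).intervalIntegrable _ _)]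
  simp only [one_mul, show ψ h = ψ 0 by simpa using hp 0]
  ring

-- Integrate by parts against the primitive `P` of `p`. Subtracting the mean of `P` restores
-- `∫ p = 0` and costs nothing, since `ψ⁽ᵐ⁺¹⁾` has mean zero over a period.
lemma IsPeanoKernel.succ {h : ℝ} (hh : h ≠ 0) {m : ℕ} {p : ℝ → ℝ}
    (hker : IsPeanoKernel h m p) :
    IsPeanoKernel h (m + 1)
      fun s => (∫ r in 0..h, ∫ q in 0..r, p q) / h - ∫ q in 0..s, p q := by
  obtain ⟨hpc, hpint, hpψ⟩ := hker
  set P : ℝ → ℝ := fun s => ∫ q in 0..s, p q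
  have hP : ∀ x, HasDerivAt P (p x) x := fun x =>
    intervalIntegral.integral_hasDerivAt_right (hpc.intervalIntegrable _ _)
      (hpc.stronglyMeasurableAtFilter _ _) hpc.continuousAt
  have hPc : Continuous P := continuous_iff_continuousAt.2 fun x => (hP x).continuousAt
  refine ⟨by fun_prop, ?_, fun ψ hψ hper => ?_⟩
  · rw [intervalIntegral.integral_sub intervalIntegrable_const (hPc.intervalIntegrable _ _),
      intervalIntegral.integral_const, smul_eq_mul, sub_zero, mul_div_cancel₀ _ hh, sub_self]
  have hDm : ∀ x, HasDerivAt (iteratedDeriv m ψ) (iteratedDeriv (m + 1) ψ x) x := fun x => by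
    rw [iteratedDeriv_succ]
    exact (hψ.differentiable_iteratedDeriv m (by exact_mod_cast m.lt_succ_self) x).hasDerivAt
  have hDc : Continuous (iteratedDeriv (m + 1) ψ) := hψ.continuous_iteratedDeriv _ le_rfl
  have hmean : ∫ s in 0..h, iteratedDeriv (m + 1) ψ s = 0 := by
    rw [intervalIntegral.integral_eq_sub_of_hasDerivAt (fun x _ => hDm x)
      (hDc.intervalIntegrable _ _)]
    simpa [sub_eq_zero] using hper.iteratedDeriv m 0
  have hparts := intervalIntegral.integral_mul_deriv_eq_deriv_mul (a := 0) (b := h)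
    (fun x _ => hP x) (fun x _ => hDm x) (hpc.intervalIntegrable _ _) (hDc.intervalIntegrable _ _)
  have hP0 : P 0 = 0 := intervalIntegral.integral_same
  have hPh : P h = 0 := hpint
  simp only [hP0, hPh, zero_mul, sub_self, zero_sub] at hparts
  rw [hpψ ψ (hψ.of_le (by exact_mod_cast m.le_succ)) hper]
  set c := (∫ r in 0..h, P r) / h
  show _ = ∫ s in 0..h, (c - P s) * iteratedDeriv (m + 1) ψ s
  simp only [sub_mul]
  rw [intervalIntegral.integral_sub (f := fun s => c * iteratedDeriv (m + 1) ψ s)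
    (g := fun s => P s * iteratedDeriv (m + 1) ψ s)
    ((continuous_const.mul hDc).intervalIntegrable _ _) ((hPc.mul hDc).intervalIntegrable _ _),
    intervalIntegral.integral_const_mul, hmean, hparts]
  ring

lemma abs_intervalIntegral_le_of_abs_le {h B : ℝ} {p : ℝ → ℝ}
    (hB : ∀ s ∈ Set.Icc 0 h, |p s| ≤ B) {r : ℝ} (hr : r ∈ Set.Icc 0 h) :
    |∫ q in 0..r, p q| ≤ B * h := by
  have hB0 : 0 ≤ B := (abs_nonneg _).trans (hB r hr)
  calc |∫ q in 0..r, p q| ≤ B * |r - 0| := by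
        refine intervalIntegral.norm_integral_le_of_norm_le_const (f := p) fun q hq => ?_
        rw [Set.uIoc_of_le hr.1] at hq
        exact hB q ⟨hq.1.le, hq.2.trans hr.2⟩
    _ ≤ B * h := by rw [sub_zero, abs_of_nonneg hr.1]; exact mul_le_mul_of_nonneg_left hr.2 hB0

lemma exists_isPeanoKernel {h : ℝ} (hh : 0 < h) {m : ℕ} (hm : 1 ≤ m) :
    ∃ p, IsPeanoKernel h m p ∧ ∀ s ∈ Set.Icc 0 h, |p s| ≤ (2 * h) ^ m := by
  induction m, hm using Nat.le_induction with
  | base =>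
    refine ⟨_, isPeanoKernel_one h, fun s hs => ?_⟩
    rw [pow_one, abs_le]
    constructor <;> linarith [hs.1, hs.2]
  | succ m _ ih =>
    obtain ⟨p, hp, hpB⟩ := ih
    refine ⟨_, hp.succ hh.ne', fun s hs => ?_⟩
    have hprim : ∀ r ∈ Set.Icc 0 h, |∫ q in 0..r, p q| ≤ (2 * h) ^ m * h :=
      fun r hr => abs_intervalIntegral_le_of_abs_le hpB hr
    have hmean : |(∫ r in 0..h, ∫ q in 0..r, p q) / h| ≤ (2 * h) ^ m * h := by
      rw [abs_div, abs_of_pos hh, div_le_iff₀ hh]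
      exact abs_intervalIntegral_le_of_abs_le hprim ⟨hh.le, le_rfl⟩
    calc _ ≤ (2 * h) ^ m * h + (2 * h) ^ m * h :=
          (abs_sub _ _).trans (add_le_add hmean (hprim s hs))
      _ = (2 * h) ^ (m + 1) := by ring

lemma abs_mul_sub_integral_le_of_periodic {h : ℝ} (hh : 0 < h) {m : ℕ} (hm : 1 ≤ m)
    {ψ : ℝ → ℝ} (hψ : ContDiff ℝ m ψ) (hper : Periodic ψ h) {M : ℝ}
    (hM : ∀ x, |iteratedDeriv m ψ x| ≤ M) :
    |h * ψ 0 - ∫ s in 0..h, ψ s| ≤ (2 * h) ^ m * M * h := by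
  obtain ⟨p, ⟨-, -, hpψ⟩, hpB⟩ := exists_isPeanoKernel hh hm
  rw [hpψ ψ hψ hper]
  simpa [abs_of_pos hh] using intervalIntegral.norm_integral_le_of_norm_le_const (a := 0)
    (b := h) (f := fun s => p s * iteratedDeriv m ψ s) fun s hs => by
      rw [Set.uIoc_of_le hh.le] at hs
      rw [Real.norm_eq_abs, abs_mul]
      exact mul_le_mul (hpB s ⟨hs.1.le, hs.2⟩) (hM s) (abs_nonneg _) (by positivity)

lemma Function.Periodic.sum_comp_add_mul {φ : ℝ → ℝ} {n : ℕ} {h : ℝ}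
    (hp : Periodic φ (n * h)) :
    Periodic (fun s => ∑ j ∈ range n, φ (s + j * h)) h := fun s => by
  have hshift := Finset.sum_range_succ' (fun j : ℕ => φ (s + j * h)) n
  rw [Finset.sum_range_succ, Nat.cast_zero, zero_mul, add_zero, ← hp s] at hshift
  beta_reduce
  convert (add_right_cancel hshift).symm using 2 with j
  push_cast
  ring_nf

lemma integral_sum_comp_add_mul {φ : ℝ → ℝ} (hφ : Continuous φ) (n : ℕ) (h : ℝ) :
    ∫ s in 0..h, ∑ j ∈ range n, φ (s + j * h) = ∫ x in 0..n * h, φ x := by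
  rw [intervalIntegral.integral_finsetSum (f := fun (j : ℕ) s => φ (s + j * h)) fun j _ =>
    (hφ.comp (continuous_add_const _)).intervalIntegrable _ _]
  have := intervalIntegral.sum_integral_adjacent_intervals (a := fun j : ℕ => j * h) (n := n)
    (f := φ) (μ := volume) fun j _ => hφ.intervalIntegrable _ _
  simp only [Nat.cast_zero, zero_mul] at this
  rw [← this]
  refine Finset.sum_congr rfl fun j _ => ?_
  rw [intervalIntegral.integral_comp_add_right]
  push_cast
  ring_nf

lemma Function.Periodic.exists_abs_riemannSum_sub_integral_le {φ : ℝ → ℝ} {T : ℝ}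
    (hp : Periodic φ T) (hT : 0 < T) {m : ℕ} (hm : 1 ≤ m) (hφ : ContDiff ℝ m φ) :
    ∃ C, ∀ n : ℕ, 1 ≤ n →
      |(T / n) * (∑ j ∈ range n, φ (j * (T / n))) - ∫ x in 0..T, φ x| ≤ C / n ^ m := by
  obtain ⟨M, hM⟩ := isBounded_iff_forall_norm_le.1 <|
    (hp.iteratedDeriv m).isBounded_of_continuous hT.ne' (hφ.continuous_iteratedDeriv m le_rfl)
  refine ⟨2 ^ m * T ^ (m + 1) * M, fun n hn => ?_⟩
  have hn0 : (0 : ℝ) < n := by exact_mod_cast hn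
  set h := T / n
  have hnh : n * h = T := mul_div_cancel₀ T hn0.ne'
  have hshift : ∀ j : ℕ, ContDiff ℝ m fun s => φ (s + j * h) :=
    fun j => hφ.comp (contDiff_id.add contDiff_const)
  have hsumM : ∀ x, |_root_.iteratedDeriv m (fun s => ∑ j ∈ range n, φ (s + j * h)) x| ≤
      n * M := by
    intro x
    rw [iteratedDeriv_fun_sum fun j _ => (hshift j).contDiffAt]
    refine (Finset.abs_sum_le_sum_abs _ _).trans ?_
    simpa [iteratedDeriv_comp_add_const] using
      Finset.sum_le_sum fun j (_ : j ∈ range n) => hM _ (Set.mem_range_self (x + j * h))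
  have herr := abs_mul_sub_integral_le_of_periodic (h := h) (div_pos hT hn0) hm
    (ContDiff.sum fun j _ => hshift j) (by rw [← hnh] at hp; exact hp.sum_comp_add_mul) hsumM
  rw [integral_sum_comp_add_mul hφ.continuous, hnh] at herr
  convert herr using 1
  · simp only [zero_add]
  · rw [← hnh]
    field_simp
    ring

lemma tendsto_rpow_mul_of_forall_abs_le_div_pow {u : ℕ → ℝ}
    (hu : ∀ m : ℕ, 1 ≤ m → ∃ C, ∀ n : ℕ, 1 ≤ n → |u n| ≤ C / n ^ m) (μ : ℝ) :
    Tendsto (fun n : ℕ => (n : ℝ) ^ μ * u n) atTop (nhds 0) := by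
  obtain ⟨m, hm⟩ := exists_nat_gt (max μ 0)
  obtain ⟨C, hC⟩ := hu m (by exact_mod_cast (le_max_right μ 0).trans_lt hm)
  have hdecay : Tendsto (fun n : ℕ => C * (n : ℝ) ^ (μ - m)) atTop (nhds 0) := by
    simpa using ((tendsto_rpow_neg_atTop (y := m - μ) (by linarith [le_max_left μ 0])).comp
      tendsto_natCast_atTop_atTop).const_mul C
  refine squeeze_zero_norm' ?_ hdecay
  filter_upwards [eventually_ge_atTop 1] with n hn
  have hn0 : (0 : ℝ) < n := by exact_mod_cast hn
  rw [norm_mul, Real.norm_eq_abs, abs_of_nonneg (rpow_nonneg hn0.le μ), rpow_sub hn0,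
    rpow_natCast, mul_div_assoc', mul_comm C, mul_div_assoc]
  exact mul_le_mul_of_nonneg_left (hC n hn) (rpow_nonneg hn0.le μ)

lemma hasDerivAt_integral_mul_comp_mul {w k k' : ℝ → ℝ} (hw : Continuous w)
    (hk : ∀ x, HasDerivAt k (k' x) x) (hk' : Continuous k') (a b u₀ : ℝ) :
    HasDerivAt (fun u => ∫ s in a..b, w s * k (s * u)) (∫ s in a..b, w s * s * k' (s * u₀)) u₀ := by
  have hkc : Continuous k := continuous_iff_continuousAt.2 fun x => (hk x).continuousAt
  obtain ⟨C, hC⟩ := (isCompact_uIcc.prod (isCompact_closedBall u₀ 1)).exists_bound_of_continuousOn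
    (f := fun p : ℝ × ℝ => w p.1 * p.1 * k' (p.1 * p.2)) (by fun_prop)
  refine (intervalIntegral.hasDerivAt_integral_of_dominated_loc_of_deriv_le (bound := fun _ => C)
    (F' := fun u s => w s * s * k' (s * u)) (Metric.ball_mem_nhds u₀ one_pos)
    (.of_forall fun u => (by fun_prop : Continuous _).aestronglyMeasurable)
    ((by fun_prop : Continuous _).intervalIntegrable _ _)
    (by fun_prop : Continuous _).aestronglyMeasurable ?_ intervalIntegrable_const ?_).2
  · refine .of_forall fun s hs u hu => hC (s, u) ⟨Set.uIoc_subset_uIcc hs, ?_⟩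
    exact Metric.ball_subset_closedBall hu
  · refine .of_forall fun s _ u _ => ?_
    exact (((hk (s * u)).comp u ((hasDerivAt_id' u).const_mul s)).const_mul (w s)).congr_deriv
      (by ring)

lemma contDiff_integral_comp_mul {k : ℝ → ℝ} (hk : ContDiff ℝ ∞ k) (a b : ℝ) :
    ContDiff ℝ ∞ fun u => ∫ s in a..b, k (s * u) := by
  have hD : ∀ (m : ℕ) (u : ℝ),
      HasDerivAt (fun u => ∫ s in a..b, s ^ m * iteratedDeriv m k (s * u))
        (∫ s in a..b, s ^ (m + 1) * iteratedDeriv (m + 1) k (s * u)) u := fun m u => by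
    simp only [pow_succ]
    refine hasDerivAt_integral_mul_comp_mul (continuous_pow m) (fun x => ?_)
      (hk.continuous_iteratedDeriv _ (by exact_mod_cast le_top)) a b u
    rw [iteratedDeriv_succ]
    exact (hk.differentiable_iteratedDeriv m
      (by exact_mod_cast WithTop.natCast_lt_top m) x).hasDerivAt
  have hiter : ∀ m : ℕ, iteratedDeriv m (fun u => ∫ s in a..b, k (s * u)) =
      fun u => ∫ s in a..b, s ^ m * iteratedDeriv m k (s * u) := by
    intro m
    induction m with
    | zero => simp
    | succ m ih => rw [iteratedDeriv_succ, ih]; exact funext fun u => (hD m u).deriv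
  exact contDiff_of_differentiable_iteratedDeriv fun m _ =>
    hiter m ▸ fun u => (hD m u).differentiableAt

-- Hadamard's lemma.
lemma exists_contDiff_eq_symmetric_slope {g : ℝ → ℝ} (hg : ContDiff ℝ ∞ g) (t : ℝ) :
    ∃ G : ℝ → ℝ, ContDiff ℝ ∞ G ∧ G 0 = 2 * deriv g t ∧
      ∀ u ≠ 0, G u = (g (t + u) - g (t - u)) / u := by
  have hg' : ContDiff ℝ ∞ (deriv g) := (contDiff_infty_iff_deriv.1 hg).2
  refine ⟨fun u => ∫ s in (-1)..1, deriv g (t + s * u),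
    contDiff_integral_comp_mul (hg'.comp (contDiff_const.add contDiff_id)) (-1) 1, by norm_num,
    fun u hu => ?_⟩
  have hprim : ∀ s, HasDerivAt (fun s => g (t + s * u) / u) (deriv g (t + s * u)) s := fun s => by
    have := (((hg.differentiable (by simp)) (t + s * u)).hasDerivAt.comp s
      (((hasDerivAt_id' s).mul_const u).const_add t)).div_const u
    rwa [one_mul, mul_div_cancel_right₀ _ hu] at this
  beta_reduce
  rw [intervalIntegral.integral_eq_sub_of_hasDerivAt (fun s _ => hprim s)
    ((hg'.continuous.comp (by fun_prop)).intervalIntegrable _ _)]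
  simp only [one_mul, neg_one_mul, ← sub_eq_add_neg]
  ring

-- `c` fills the removable singularities of `f (t + u) + f (t - u)` at `u ∈ ℤ T`.
open Classical in
noncomputable def symmetrize (f : ℝ → ℝ) (t T c u : ℝ) : ℝ :=
  if ∃ k : ℤ, u = k * T then c else f (t + u) + f (t - u)

section symmetrize

variable {f : ℝ → ℝ} {t T c u : ℝ}

lemma symmetrize_of_forall_ne (hu : ∀ k : ℤ, u ≠ k * T) :
    symmetrize f t T c u = f (t + u) + f (t - u) := by
  simp [symmetrize, hu]

lemma symmetrize_zero : symmetrize f t T c 0 = c :=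
  if_pos ⟨0, by simp⟩

lemma Function.Periodic.symmetrize (hper : Periodic f T) : Periodic (symmetrize f t T c) T := by
  intro u
  have hlattice : (∃ k : ℤ, u + T = k * T) ↔ ∃ k : ℤ, u = k * T :=
    ⟨fun ⟨k, hk⟩ => ⟨k - 1, by push_cast; linarith⟩,
      fun ⟨k, hk⟩ => ⟨k + 1, by push_cast; linarith⟩⟩
  simp only [_root_.symmetrize, ← add_assoc, hper (t + u),
    show t - (u + T) = t - u - T by ring, hper.sub_eq]
  split_ifs <;> tauto

variable {a b : ℝ} {g : ℝ → ℝ}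

lemma symmetrize_eventuallyEq_symmetric_slope (hT : T = b - a) (ht : t ∈ Set.Ioo a b)
    (hfg : ∀ x ∈ Set.Icc a b, x ≠ t → f x = g x / (x - t)) {G : ℝ → ℝ} (hG0 : G 0 = c)
    (hG : ∀ u ≠ 0, G u = (g (t + u) - g (t - u)) / u) :
    symmetrize f t T c =ᶠ[𝓝 0] G := by
  have hδ : 0 < min (t - a) (b - t) := lt_min (by linarith [ht.1]) (by linarith [ht.2])
  filter_upwards [Ioo_mem_nhds (neg_lt_zero.2 hδ) hδ] with v ⟨hv₁, hv₂⟩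
  rcases eq_or_ne v 0 with rfl | hv0
  · rw [symmetrize_zero, hG0]
  have hva := min_le_left (t - a) (b - t)
  have hvb := min_le_right (t - a) (b - t)
  rw [symmetrize_of_forall_ne (ne_intCast_mul_of_abs_lt (by linarith [ht.2])
      (abs_lt.2 ⟨by linarith, by linarith⟩) hv0),
    hfg _ ⟨by linarith, by linarith⟩ (by simpa using hv0),
    hfg _ ⟨by linarith, by linarith⟩ (by simpa using hv0), hG v hv0]
  ring

lemma contDiff_symmetrize (hT : T = b - a) (ht : t ∈ Set.Ioo a b) (hper : Periodic f T)
    (hf : ContDiffOn ℝ ∞ f {x : ℝ | ∀ k : ℤ, x ≠ t + k * T}) (hg : ContDiff ℝ ∞ g)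
    (hfg : ∀ x ∈ Set.Icc a b, x ≠ t → f x = g x / (x - t)) :
    ContDiff ℝ ∞ (symmetrize f t T (2 * deriv g t)) := by
  have hT0 : T ≠ 0 := by linarith [ht.1, ht.2]
  obtain ⟨G, hGsmooth, hG0, hG⟩ := exists_contDiff_eq_symmetric_slope hg t
  have hzero : ContDiffAt ℝ ∞ (symmetrize f t T (2 * deriv g t)) 0 :=
    hGsmooth.contDiffAt.congr_of_eventuallyEq
      (symmetrize_eventuallyEq_symmetric_slope hT ht hfg hG0 hG)
  have hf_at : ∀ x, (∀ k : ℤ, x ≠ t + k * T) → ContDiffAt ℝ ∞ f x := fun x hx =>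
    hf.contDiffAt ((isOpen_setOf_forall_ne_add_intCast_mul t hT0).mem_nhds hx)
  refine contDiff_iff_contDiffAt.2 fun u => ?_
  by_cases hu : ∃ k : ℤ, u = k * T
  · obtain ⟨k, rfl⟩ := hu
    have hshift := funext fun v =>
      (hper.symmetrize (t := t) (c := 2 * deriv g t)).sub_int_mul_eq (x := v) k
    have hzero' : ContDiffAt ℝ ∞ (symmetrize f t T (2 * deriv g t)) (k * T - k * T) := by
      rwa [sub_self]
    simpa only [Function.comp_def, hshift] using
      hzero'.comp (f := fun v => v - k * T) (k * T) (contDiffAt_id.sub contDiffAt_const)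
  push Not at hu
  have hnear : symmetrize f t T (2 * deriv g t) =ᶠ[𝓝 u] fun v => f (t + v) + f (t - v) := by
    filter_upwards [(isOpen_setOf_forall_ne_add_intCast_mul 0 hT0).mem_nhds (by simpa using hu)]
      with v hv
    exact symmetrize_of_forall_ne (by simpa using hv)
  refine ContDiffAt.congr_of_eventuallyEq (.add ?_ ?_) hnear
  · exact (hf_at _ fun k h => hu k (by linarith)).comp u (contDiffAt_const.add contDiffAt_id)
  · exact (hf_at _ fun k h => hu (-k) (by push_cast; linarith)).comp u
      (contDiffAt_const.sub contDiffAt_id)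

lemma sum_symmetrize_mul_div (hT : 0 < T) (hper : Periodic f T) {n : ℕ} (hn : 1 ≤ n) :
    ∑ j ∈ range n, symmetrize f t T c (j * (T / n)) =
      c + 2 * ∑ j ∈ Icc 1 (n - 1), f (t + j * (T / n)) := by
  have hn0 : (0 : ℝ) < n := by exact_mod_cast hn
  have hIcc : Icc 1 (n - 1) = Ico 1 n := by ext; simp; omega
  have hterm : ∀ j ∈ Ico 1 n, symmetrize f t T c (j * (T / n)) =
      f (t + j * (T / n)) + f (t + (n - j : ℕ) * (T / n)) := by
    intro j hj
    obtain ⟨hj₁, hjn⟩ := Finset.mem_Ico.1 hj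
    have hj₁' : (1 : ℝ) ≤ j := by exact_mod_cast hj₁
    have hjn' : (j : ℝ) < n := by exact_mod_cast hjn
    have hpos : 0 < j * (T / n) := by positivity
    have hlt : j * (T / n) < T := by
      rw [mul_div_assoc', div_lt_iff₀ hn0]
      exact mul_lt_mul_of_pos_right hjn' hT |>.trans_eq (mul_comm _ _)
    rw [symmetrize_of_forall_ne (ne_intCast_mul_of_abs_lt hT (by rwa [abs_of_pos hpos]) hpos.ne'),
      ← hper (t - _), Nat.cast_sub hjn.le]
    congr 2
    field_simp
    ring
  rw [range_eq_Ico, sum_eq_sum_Ico_succ_bot (by omega), Nat.cast_zero, zero_mul, symmetrize_zero,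
    sum_congr rfl hterm, sum_add_distrib, sum_Ico_reflect (fun k : ℕ => f (t + k * (T / n))) 1
      (by omega), show n + 1 - n = 1 by omega, Nat.add_sub_cancel, hIcc]
  ring

end symmetrize

lemma setIntegral_Icc_diff_Ioo_of_periodic {f : ℝ → ℝ} {a b t ε : ℝ}
    (hper : Periodic f (b - a)) (hε : 0 < ε) (hat : a ≤ t - ε) (htb : t + ε ≤ b)
    (hleft : IntervalIntegrable f volume a (t - ε))
    (hright : IntervalIntegrable f volume (t + ε) b) :
    ∫ x in Set.Icc a b \ Set.Ioo (t - ε) (t + ε), f x =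
      ∫ x in (t + ε)..(t - ε + (b - a)), f x := by
  have hsplit : Set.Icc a b \ Set.Ioo (t - ε) (t + ε) =
      Set.Icc a (t - ε) ∪ Set.Icc (t + ε) b := by
    ext x
    simp only [Set.mem_sdiff, Set.mem_Icc, Set.mem_Ioo, Set.mem_union]
    constructor
    · rintro ⟨⟨h₁, h₂⟩, h₃⟩
      by_cases h : x ≤ t - ε
      · exact .inl ⟨h₁, h⟩
      · exact .inr ⟨by by_contra; exact h₃ ⟨by linarith, by linarith⟩, h₂⟩
    · rintro (⟨h₁, h₂⟩ | ⟨h₁, h₂⟩)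
      · exact ⟨⟨h₁, by linarith⟩, fun h => by linarith [h.1]⟩
      · exact ⟨⟨by linarith, h₂⟩, fun h => by linarith [h.2]⟩
  have hdisj : Disjoint (Set.Icc a (t - ε)) (Set.Icc (t + ε) b) :=
    Set.disjoint_left.2 fun x hx₁ hx₂ => by linarith [hx₁.2, hx₂.1]
  have hshift : ∫ x in a..(t - ε), f x = ∫ x in b..(t - ε + (b - a)), f x := by
    calc ∫ x in a..(t - ε), f x = ∫ x in a..(t - ε), f (x + (b - a)) :=
          intervalIntegral.integral_congr fun x _ => (hper x).symm
      _ = _ := by rw [intervalIntegral.integral_comp_add_right, add_sub_cancel]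
  have hshifted : IntervalIntegrable f volume b (t - ε + (b - a)) := by
    simpa [hper.sub_eq] using hleft.comp_sub_right (b - a)
  rw [hsplit, setIntegral_union hdisj measurableSet_Icc
      ((intervalIntegrable_iff_integrableOn_Icc_of_le hat).1 hleft)
      ((intervalIntegrable_iff_integrableOn_Icc_of_le htb).1 hright),
    integral_Icc_eq_integral_Ioc, integral_Icc_eq_integral_Ioc,
    ← intervalIntegral.integral_of_le hat, ← intervalIntegral.integral_of_le htb, hshift, add_comm,
    intervalIntegral.integral_add_adjacent_intervals hright hshifted]

lemma integral_comp_add_add_comp_sub_of_periodic {f : ℝ → ℝ} {t T ε : ℝ} (hper : Periodic f T)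
    (hint : IntervalIntegrable f volume (t + ε) (t - ε + T)) :
    ∫ u in ε..(T - ε), (f (t + u) + f (t - u)) = 2 * ∫ x in (t + ε)..(t - ε + T), f x := by
  have hplus : ∫ u in ε..(T - ε), f (t + u) = ∫ x in (t + ε)..(t - ε + T), f x := by
    rw [intervalIntegral.integral_comp_add_left]
    ring_nf
  have hminus : ∫ u in ε..(T - ε), f (t - u) = ∫ x in (t + ε)..(t - ε + T), f x := by
    simp only [← hper (t - _), show ∀ u, t - u + T = t + T - u from fun u => by ring,
      intervalIntegral.integral_comp_sub_left]
    ring_nf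
  have hint₁ : IntervalIntegrable (fun u => f (t + u)) volume ε (T - ε) := by
    convert hint.comp_add_left t using 1 <;> ring
  have hint₂ : IntervalIntegrable (fun u => f (t - u)) volume ε (T - ε) := by
    convert (hint.comp_sub_left (t + T)).symm using 1
    · exact funext fun u => by rw [← hper, sub_add_eq_add_sub]
    all_goals ring
  rw [intervalIntegral.integral_add hint₁ hint₂, hplus, hminus, two_mul]

lemma tendsto_setIntegral_Icc_diff_Ioo {f F : ℝ → ℝ} {a b t T : ℝ} (hT : T = b - a)
    (ht : t ∈ Set.Ioo a b) (hper : Periodic f T)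
    (hf : ContinuousOn f {x : ℝ | ∀ k : ℤ, x ≠ t + k * T}) (hF : Continuous F)
    (hFf : ∀ u ∈ Set.Ioo 0 T, F u = f (t + u) + f (t - u)) :
    Tendsto (fun ε => ∫ x in Set.Icc a b \ Set.Ioo (t - ε) (t + ε), f x) (𝓝[>] 0)
      (𝓝 ((1 / 2) * ∫ u in 0..T, F u)) := by
  obtain ⟨hat, htb⟩ := ht
  have hT0 : 0 < T := by linarith
  have hcont : Continuous fun ε => (1 / 2) * ∫ u in ε..(T - ε), F u := by
    have hprim := intervalIntegral.continuous_primitive (μ := volume)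
      (fun _ _ => hF.intervalIntegrable _ _) 0
    have hsplit : ∀ ε, ∫ u in ε..(T - ε), F u = (∫ u in 0..(T - ε), F u) - ∫ u in 0..ε, F u :=
      fun ε => (intervalIntegral.integral_interval_sub_left (hF.intervalIntegrable _ _)
        (hF.intervalIntegrable _ _)).symm
    simp only [hsplit]
    fun_prop
  have hlim := (hcont.tendsto 0).mono_left (nhdsWithin_le_nhds (s := Set.Ioi 0))
  rw [sub_zero] at hlim
  refine hlim.congr' ?_
  filter_upwards [Ioo_mem_nhdsGT (lt_min (sub_pos.2 hat) (sub_pos.2 htb))] with ε ⟨hε, hεδ⟩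
  have hεa : ε < t - a := hεδ.trans_le (min_le_left _ _)
  have hεb : ε < b - t := hεδ.trans_le (min_le_right _ _)
  have hint : ∀ c d, c ≤ d → t - T < c → d < t + T → (d < t ∨ t < c) →
      IntervalIntegrable f volume c d := fun c d hle hc hd hcd =>
    (hf.mono (Icc_subset_setOf_forall_ne_add_intCast_mul hT0 hc hd hcd)).intervalIntegrable_of_Icc
      hle
  have hleft := hint a (t - ε) (by linarith) (by linarith) (by linarith) (.inl (by linarith))
  have hright := hint (t + ε) b (by linarith) (by linarith) (by linarith) (.inr (by linarith))
  have hmid := hint (t + ε) (t - ε + T) (by linarith) (by linarith) (by linarith)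
    (.inr (by linarith))
  rw [hT] at hper hmid ⊢
  rw [setIntegral_Icc_diff_Ioo_of_periodic hper hε (by linarith) (by linarith) hleft hright,
    intervalIntegral.integral_congr (g := fun u => f (t + u) + f (t - u)) fun u hu => hFf u ?_,
    integral_comp_add_add_comp_sub_of_periodic hper hmid]
  · ring
  · rw [Set.uIcc_of_le (by linarith)] at hu
    exact ⟨by linarith [hu.1], by linarith [hu.2]⟩

theorem stmt_4_general (a b t T : ℝ) (hT : T = b - a) (ht : t ∈ Set.Ioo a b)
    (f g : ℝ → ℝ)
    (hper : ∀ x, f (x + T) = f x)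
    (hf : ContDiffOn ℝ (⊤ : ℕ∞) f {x : ℝ | ∀ k : ℤ, x ≠ t + k * T})
    (hg : ContDiff ℝ (⊤ : ℕ∞) g)
    (hfg : ∀ x ∈ Set.Icc a b, x ≠ t → f x = g x / (x - t) ^ 1)
    (I : ℝ)
    (hI : Tendsto (fun ε : ℝ =>
        (∫ x in Set.Icc a b \ Set.Ioo (t - ε) (t + ε), f x))
      (nhdsWithin 0 (Set.Ioi 0)) (nhds I)) :
    ∀ μ : ℝ, 0 < μ →
      Tendsto (fun n : ℕ =>
        (n : ℝ) ^ μ *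
          ((T / n) * (∑ j ∈ Finset.Icc 1 (n - 1), f (t + (j : ℝ) * (T / n)))
            + deriv g t * (T / n)
            - I))
        atTop (nhds 0) := by
  intro μ _
  have hT0 : 0 < T := by linarith [ht.1, ht.2]
  have hF : ContDiff ℝ ∞ (symmetrize f t T (2 * deriv g t)) :=
    contDiff_symmetrize hT ht hper hf hg (by simpa only [pow_one] using hfg)
  have hIF : I = 1 / 2 * ∫ u in 0..T, symmetrize f t T (2 * deriv g t) u :=
    tendsto_nhds_unique hI <| tendsto_setIntegral_Icc_diff_Ioo hT ht hper hf.continuousOn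
      hF.continuous fun u hu => symmetrize_of_forall_ne <|
        ne_intCast_mul_of_abs_lt hT0 (abs_lt.2 ⟨by linarith [hu.1], hu.2⟩) hu.1.ne'
  refine tendsto_rpow_mul_of_forall_abs_le_div_pow (fun m hm => ?_) μ
  obtain ⟨C, hC⟩ := (Periodic.symmetrize hper).exists_abs_riemannSum_sub_integral_le hT0 hm
    (hF.of_le (by exact_mod_cast le_top))
  refine ⟨C / 2, fun n hn => ?_⟩
  have hCn := hC n hn
  rw [sum_symmetrize_mul_div hT0 hper hn] at hCn
  rw [hIF, div_right_comm, le_div_iff₀ two_pos]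
  refine (le_of_eq ?_).trans hCn
  rw [show ∀ x : ℝ, |x| * 2 = |x * 2| from fun x => by rw [abs_mul, abs_two]]
  congr 1
  ring

theorem stmt_4 (a b t T : ℝ) (hab : a < b) (hT : T = b - a) (ht : t ∈ Set.Ioo a b)
    (f g : ℝ → ℝ)
    (hper : ∀ x, f (x + T) = f x)
    (hf : ContDiffOn ℝ (⊤ : ℕ∞) f {x : ℝ | ∀ k : ℤ, x ≠ t + k * T})
    (hg : ContDiff ℝ (⊤ : ℕ∞) g)
    (hfg : ∀ x ∈ Set.Icc a b, x ≠ t → f x = g x / (x - t) ^ 1)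
    (I : ℝ)
    (hI : Tendsto (fun ε : ℝ =>
        (∫ x in Set.Icc a b \ Set.Ioo (t - ε) (t + ε), f x))
      (nhdsWithin 0 (Set.Ioi 0)) (nhds I)) :
    ∀ μ : ℝ, 0 < μ →
      Tendsto (fun n : ℕ =>
        (n : ℝ) ^ μ *
          ((T / n) * (∑ j ∈ Finset.Icc 1 (n - 1), f (t + (j : ℝ) * (T / n)))
            + deriv g t * (T / n)
            - I))
        atTop (nhds 0) :=
  stmt_4_general a b t T hT ht f g hper hf hg hfg I hI
end

section
/- (Richardson identity, s = 2, m = 3.) For every function f : ℝ → ℝ, all reals t, A, B, every T > 0, and every positive integer n, one has −2·T̂^{(0)}_{3,n} + 5·T̂^{(0)}_{3,2n} − 2·T̂^{(0)}_{3,4n} = 2h ∑_{j=1}^{n} f(t + jh − h/2) − (h/2) ∑_{j=1}^{2n} f(t + jh/2 − h/4), where h = T/n; that is, two steps of Richardson-like extrapolation (eliminating the powers h¹ and h^{−1}) produce exactly the derivative-free formula T̂^{(2)}_{3,n}, in which the coefficients A and B cancel completely. -/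
open Real Finset

/-- The quadrature formula `T̂⁰₃ₙ[f] = h ∑_{j=1}^{n-1} f(t+jh) - (π²/3) A h⁻¹ + (1/6) B h`,
with `h = T/n`. In the paper, `A = g′(t)` and `B = g‴(t)`. -/
noncomputable def That0 (f : ℝ → ℝ) (t A B T : ℝ) (n : ℕ) : ℝ :=
  (T / n) * ∑ j ∈ Finset.Icc 1 (n - 1), f (t + (j : ℝ) * (T / n))
    - (π ^ 2 / 3) * A * (T / n)⁻¹ + (1 / 6) * B * (T / n)

/-!
With `h = T / n`, let `R(h) = h ∑_{j=1}^{n} f(t + j h)` be the right-endpoint sum and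
`M(h) = h ∑_{j=1}^{n} f(t + j h - h/2)` the midpoint sum over `[t, t + T]`, so that
`T̂⁰₃ₙ = R(h) - h f(t + T) - (π²/3) A h⁻¹ + (1/6) B h`. Splitting the nodes of the grid of step
`h/2` into even and odd ones gives `R(h/2) = (R(h) + M(h)) / 2`. The weights `(-2, 5, -2)` on the
grids `h, h/2, h/4` annihilate both `h⁻¹` and `h`, so `A`, `B` and the endpoint terms
`h f(t + T)` cancel, and `R(h)` cancels too, leaving `2 M(h) - M(h/2)`.
-/

theorem Finset.sum_Icc_one_two_mul {M : Type*} [AddCommMonoid M] (g : ℕ → M) (n : ℕ) :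
    ∑ j ∈ Icc 1 (2 * n), g j = ∑ k ∈ Icc 1 n, g (2 * k) + ∑ k ∈ Icc 1 n, g (2 * k - 1) := by
  induction n with
  | zero => simp
  | succ n ih =>
    rw [show 2 * (n + 1) = 2 * n + 1 + 1 by ring, sum_Icc_succ_top (by omega),
      sum_Icc_succ_top (by omega), ih, sum_Icc_succ_top (by omega), sum_Icc_succ_top (by omega),
      show 2 * (n + 1) - 1 = 2 * n + 1 by omega, show 2 * (n + 1) = 2 * n + 1 + 1 by ring]
    abel

theorem Finset.sum_Icc_one_pred {M : Type*} [AddCommGroup M] (g : ℕ → M) {m : ℕ} (hm : 0 < m) :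
    ∑ j ∈ Icc 1 (m - 1), g j = ∑ j ∈ Icc 1 m, g j - g m := by
  obtain ⟨m, rfl⟩ := Nat.exists_eq_add_one_of_ne_zero hm.ne'
  rw [sum_Icc_succ_top (by omega), Nat.add_sub_cancel, add_sub_cancel_right]

theorem sum_Icc_grid_half_step (f : ℝ → ℝ) (t h : ℝ) (n : ℕ) :
    ∑ j ∈ Icc 1 (2 * n), f (t + j * (h / 2))
      = ∑ k ∈ Icc 1 n, f (t + k * h) + ∑ k ∈ Icc 1 n, f (t + k * h - h / 2) := by
  rw [sum_Icc_one_two_mul]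
  congr 1 <;> refine sum_congr rfl fun k hk => congrArg f ?_
  · push_cast
    ring
  · rw [Nat.cast_sub (by linarith [(mem_Icc.mp hk).1])]
    push_cast
    ring

theorem That0_eq_sum_Icc (f : ℝ → ℝ) (t A B T : ℝ) {m : ℕ} (hm : 0 < m) :
    That0 f t A B T m = (T / m) * ∑ j ∈ Icc 1 m, f (t + j * (T / m)) - (T / m) * f (t + T)
      - (π ^ 2 / 3) * A * (T / m)⁻¹ + (1 / 6) * B * (T / m) := by
  have hmT : (m : ℝ) * (T / m) = T := mul_div_cancel₀ T (Nat.cast_ne_zero.mpr hm.ne')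
  rw [That0, sum_Icc_one_pred _ hm, hmT, mul_sub]

theorem stmt_15_general (f : ℝ → ℝ) (t A B T : ℝ) (n : ℕ) (hn : 0 < n) :
    -2 * That0 f t A B T n + 5 * That0 f t A B T (2 * n) - 2 * That0 f t A B T (4 * n)
      = 2 * (T / n) * ∑ j ∈ Finset.Icc 1 n, f (t + (j : ℝ) * (T / n) - (T / n) / 2)
          - ((T / n) / 2) *
            ∑ j ∈ Finset.Icc 1 (2 * n), f (t + (j : ℝ) * (T / n) / 2 - (T / n) / 4) := by
  rw [That0_eq_sum_Icc _ _ _ _ _ hn, That0_eq_sum_Icc _ _ _ _ _ (by omega : 0 < 2 * n),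
    That0_eq_sum_Icc _ _ _ _ _ (by omega : 0 < 4 * n)]
  set h := T / n
  have half_step : T / ((2 * n : ℕ) : ℝ) = h / 2 := by push_cast; ring
  have quarter_step : T / ((4 * n : ℕ) : ℝ) = h / 2 / 2 := by push_cast; ring
  rw [half_step, quarter_step, show 4 * n = 2 * (2 * n) by ring, sum_Icc_grid_half_step f t (h / 2) (2 * n),
    sum_Icc_grid_half_step f t h n]
  ring_nf

theorem stmt_15 (f : ℝ → ℝ) (t A B T : ℝ) (hT : 0 < T) (n : ℕ) (hn : 0 < n) :
    -2 * That0 f t A B T n + 5 * That0 f t A B T (2 * n) - 2 * That0 f t A B T (4 * n)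
      = 2 * (T / n) * ∑ j ∈ Finset.Icc 1 n, f (t + (j : ℝ) * (T / n) - (T / n) / 2)
          - ((T / n) / 2) *
            ∑ j ∈ Finset.Icc 1 (2 * n), f (t + (j : ℝ) * (T / n) / 2 - (T / n) / 4) :=
  stmt_15_general f t A B T n hn
end

section
/- For every integer m and every t ∈ (−π, π), lim_{ε→0+} ( ∫_{[−π,π]∖(t−ε,t+ε)} (cos((x−t)/2) / sin³((x−t)/2)) e^{imx} dx − 16 i m e^{imt} / ε ) = −sgn(m) · 4π i m² e^{imt}, where sgn(m) is 1, 0, −1 according as m > 0, m = 0, m < 0. (This is the Hadamard finite part ⨎_{−π}^{π} (cos((x−t)/2)/sin³((x−t)/2)) e^{imx} dx = −sgn(m) i 4π m² e^{imt}, with the finite part defined via the subtraction 2g′(t)/ε, where g(x) = (x−t)³ cos((x−t)/2)/sin³((x−t)/2) · e^{imx} has g′(t) = 8 i m e^{imt}.) -/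
/-!
Integrating by parts twice turns `cos (u/2) / sin (u/2) ^ 3 * e^{imu}` into the boundary terms
`-e^{imu} / sin (u/2) ^ 2 - 2im e^{imu} cot (u/2)` plus `2m² cot (u/2) e^{imu}`, and for `m ≥ 1`
the identity `cot (u/2) (e^{imu} - 1) = i (1 + e^{imu} + 2 ∑_{0<k<m} e^{iku})` gives the latter the
primitive `2 log |sin (u/2)| + iu + e^{imu}/m + 2 ∑_{0<k<m} e^{iku}/k`. Everything in the resulting
primitive `H` is `2π`-periodic except `iu`, so `H (π - t) - H (-π - t) = -4πim²`, while
`H (-ε) - H ε = 16im/ε + o(1)` by Taylor expansion. After the substitution `u = x - t` this is the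
claim for `m ≥ 0`; negative `m` follow by complex conjugation.
-/

open Real Filter MeasureTheory Complex

open Topology Set ComplexConjugate

lemma setIntegral_Icc_diff_Ioo_eq_sub {E : Type*} [NormedAddCommGroup E] [NormedSpace ℝ E]
    [CompleteSpace E] {f F : ℝ → E} {a b c d : ℝ} (hac : a ≤ c) (hcd : c < d) (hdb : d ≤ b)
    (hF : ∀ x ∈ Icc a c ∪ Icc d b, HasDerivAt F (f x) x)
    (hf : ContinuousOn f (Icc a c ∪ Icc d b)) :
    ∫ x in Icc a b \ Ioo c d, f x = F c - F a + (F b - F d) := by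
  have hset : Icc a b \ Ioo c d = Icc a c ∪ Icc d b := by
    ext x
    simp only [Set.mem_sdiff, mem_Icc, mem_Ioo, mem_union]
    grind
  have hdisj : Disjoint (Icc a c) (Icc d b) :=
    Set.disjoint_left.mpr fun x hx hx' => by linarith [hx.2, hx'.1]
  have hftc {p q : ℝ} (hpq : p ≤ q) (hsub : Icc p q ⊆ Icc a c ∪ Icc d b) :
      ∫ x in Icc p q, f x = F q - F p := by
    rw [integral_Icc_eq_integral_Ioc, ← intervalIntegral.integral_of_le hpq]
    refine intervalIntegral.integral_eq_sub_of_hasDerivAt (fun x hx => hF x (hsub ?_))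
      ((hf.mono hsub).intervalIntegrable_of_Icc hpq)
    rwa [uIcc_of_le hpq] at hx
  rw [hset, setIntegral_union hdisj measurableSet_Icc
    (hf.mono subset_union_left).integrableOn_Icc (hf.mono subset_union_right).integrableOn_Icc,
    hftc hac subset_union_left, hftc hdb subset_union_right]

lemma Real.sin_half_ne_zero {u : ℝ} (hu : u ≠ 0) (hlo : -(2 * π) < u) (hhi : u < 2 * π) :
    Real.sin (u / 2) ≠ 0 := by
  rw [Ne, Real.sin_eq_zero_iff_of_lt_of_lt (by linarith) (by linarith)]
  exact fun h => hu (by linarith)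

lemma Real.abs_sin_sq_sub_sq_le (x : ℝ) : |Real.sin x ^ 2 - x ^ 2| ≤ x ^ 4 / 3 := by
  have h₁ : |Real.sin x - x| ≤ |x| ^ 3 / 6 := by
    rw [abs_sub_comm]
    exact Real.abs_sub_sin_le x
  have h₂ : |Real.sin x + x| ≤ 2 * |x| := by
    linarith [abs_add_le (Real.sin x) x, Real.abs_sin_le_abs (x := x)]
  calc |Real.sin x ^ 2 - x ^ 2| = |Real.sin x - x| * |Real.sin x + x| := by
        rw [← abs_mul]
        ring_nf
    _ ≤ |x| ^ 3 / 6 * (2 * |x|) := by gcongr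
    _ = x ^ 4 / 3 := by
        rw [show x ^ 4 = |x| ^ 4 by rw [pow_abs, abs_of_nonneg (by positivity)]]
        ring

lemma Real.abs_cos_sub_one_le (x : ℝ) : |Real.cos x - 1| ≤ x ^ 2 / 2 := by
  rw [abs_sub_comm, abs_of_nonneg (by linarith [Real.cos_le_one x])]
  linarith [Real.one_sub_sq_div_two_le_cos (x := x)]

namespace FinitePart

-- `ε * sin (ε/2) ^ 2` times the function of the next lemma, written so that its Taylor expansion
-- visibly starts in degree 4.
lemma abs_boundaryNumerator_le (m ε : ℝ) :
    |ε * Real.sin (m * ε) + m * ε * Real.cos (m * ε) * Real.sin ε - 8 * m * Real.sin (ε / 2) ^ 2|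
      ≤ (|m| ^ 3 + |m|) * ε ^ 4 := by
  have ha : |Real.sin (m * ε) - m * ε| ≤ (|m| * |ε|) ^ 3 / 6 := by
    rw [← abs_mul, abs_sub_comm]
    exact Real.abs_sub_sin_le _
  have hb := Real.abs_cos_sub_one_le (m * ε)
  have hc : |Real.sin ε| ≤ |ε| := Real.abs_sin_le_abs
  have hd : |Real.sin ε - ε| ≤ |ε| ^ 3 / 6 := by
    rw [abs_sub_comm]
    exact Real.abs_sub_sin_le _
  have he := Real.abs_sin_sq_sub_sq_le (ε / 2)
  calc _ = |ε * (Real.sin (m * ε) - m * ε) + m * ε * (Real.cos (m * ε) - 1) * Real.sin ε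
          + m * ε * (Real.sin ε - ε) - 8 * m * (Real.sin (ε / 2) ^ 2 - (ε / 2) ^ 2)| := by
        ring_nf
    _ ≤ |ε * (Real.sin (m * ε) - m * ε)| + |m * ε * (Real.cos (m * ε) - 1) * Real.sin ε|
          + |m * ε * (Real.sin ε - ε)| + |8 * m * (Real.sin (ε / 2) ^ 2 - (ε / 2) ^ 2)| := by
        linarith [abs_add_le (ε * (Real.sin (m * ε) - m * ε))
            (m * ε * (Real.cos (m * ε) - 1) * Real.sin ε),
          abs_add_le (ε * (Real.sin (m * ε) - m * ε) + m * ε * (Real.cos (m * ε) - 1) * Real.sin ε)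
            (m * ε * (Real.sin ε - ε)),
          abs_sub (ε * (Real.sin (m * ε) - m * ε) + m * ε * (Real.cos (m * ε) - 1) * Real.sin ε
            + m * ε * (Real.sin ε - ε)) (8 * m * (Real.sin (ε / 2) ^ 2 - (ε / 2) ^ 2))]
    _ ≤ |ε| * ((|m| * |ε|) ^ 3 / 6) + |m| * |ε| * ((m * ε) ^ 2 / 2) * |ε|
          + |m| * |ε| * (|ε| ^ 3 / 6) + 8 * |m| * ((ε / 2) ^ 4 / 3) := by
        simp only [abs_mul, Nat.abs_ofNat]
        gcongr
    _ ≤ (|m| ^ 3 + |m|) * ε ^ 4 := by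
        have h₂ : (m * ε) ^ 2 = |m| ^ 2 * |ε| ^ 2 := by rw [mul_pow, sq_abs, sq_abs]
        have h₄ : ε ^ 4 = |ε| ^ 4 := by rw [pow_abs, abs_of_nonneg (by positivity)]
        rw [h₂, div_pow, h₄]
        nlinarith [mul_nonneg (pow_nonneg (abs_nonneg m) 3) (pow_nonneg (abs_nonneg ε) 4),
          mul_nonneg (abs_nonneg m) (pow_nonneg (abs_nonneg ε) 4)]

lemma tendsto_sin_mul_div_sin_half_sq_add_sub (m : ℝ) :
    Tendsto (fun ε => Real.sin (m * ε) / Real.sin (ε / 2) ^ 2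
        + 2 * m * Real.cos (m * ε) * Real.cos (ε / 2) / Real.sin (ε / 2) - 8 * m / ε)
      (𝓝[>] 0) (𝓝 0) := by
  have hlin : Tendsto (fun ε : ℝ => π ^ 2 * (|m| ^ 3 + |m|) * ε) (𝓝[>] 0) (𝓝 0) :=
    ((continuous_const.mul continuous_id).tendsto' 0 0 (by simp)).mono_left nhdsWithin_le_nhds
  refine squeeze_zero_norm' ?_ hlin
  filter_upwards [Ioo_mem_nhdsGT pi_pos] with ε ⟨hε, hεπ⟩
  have hS : ε / π ≤ Real.sin (ε / 2) := by
    have := Real.mul_le_sin (x := ε / 2) (by positivity) (by linarith)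
    rwa [show 2 / π * (ε / 2) = ε / π by field_simp] at this
  have hS₀ : 0 < Real.sin (ε / 2) := lt_of_lt_of_le (by positivity) hS
  have hN := abs_boundaryNumerator_le m ε
  rw [show Real.sin ε = 2 * Real.sin (ε / 2) * Real.cos (ε / 2) by
    rw [← Real.sin_two_mul]; ring_nf] at hN
  calc ‖_‖ = |ε * Real.sin (m * ε)
        + m * ε * Real.cos (m * ε) * (2 * Real.sin (ε / 2) * Real.cos (ε / 2))
        - 8 * m * Real.sin (ε / 2) ^ 2| / (ε * Real.sin (ε / 2) ^ 2) := by
        rw [Real.norm_eq_abs, ← abs_of_pos (by positivity : 0 < ε * Real.sin (ε / 2) ^ 2),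
          ← abs_div]
        congr 1
        field_simp
    _ ≤ (|m| ^ 3 + |m|) * ε ^ 4 / (ε * (ε / π) ^ 2) := by gcongr
    _ = π ^ 2 * (|m| ^ 3 + |m|) * ε := by field_simp

lemma exp_I_mul_sub_one_mul_cos_half (u : ℝ) :
    (exp (I * u) - 1) * Real.cos (u / 2) = I * (exp (I * u) + 1) * Real.sin (u / 2) := by
  have hw : exp (I * u) = (Real.cos (u / 2) + Real.sin (u / 2) * I) ^ 2 := by
    push_cast
    rw [← Complex.exp_mul_I, ← Complex.exp_nat_mul]
    ring_nf
  have hpyth : (Real.sin (u / 2) : ℂ) ^ 2 + (Real.cos (u / 2) : ℂ) ^ 2 = 1 := by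
    exact_mod_cast Real.sin_sq_add_cos_sq (u / 2)
  rw [hw]
  linear_combination (Real.cos (u / 2) + I * Real.sin (u / 2) : ℂ) * hpyth
    - (Real.cos (u / 2) * Real.sin (u / 2) ^ 2 + I * Real.sin (u / 2) ^ 3 : ℂ) * I_sq

lemma cos_half_mul_exp_sub_one {m : ℕ} (hm : 1 ≤ m) (u : ℝ) :
    Real.cos (u / 2) * (exp (I * m * u) - 1) =
      I * Real.sin (u / 2) * (1 + exp (I * m * u) + 2 * ∑ k ∈ Finset.Ico 1 m, exp (I * k * u)) := by
  induction m, hm using Nat.le_induction with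
  | base =>
    rw [Finset.Ico_self, Finset.sum_empty, Nat.cast_one, mul_one]
    linear_combination exp_I_mul_sub_one_mul_cos_half u
  | succ m hm ih =>
    have hexp : exp (I * (m + 1 : ℕ) * u) = exp (I * m * u) * exp (I * u) := by
      rw [← Complex.exp_add]
      push_cast
      ring_nf
    rw [Finset.sum_Ico_succ_top hm, hexp]
    linear_combination ih + exp (I * m * u) * exp_I_mul_sub_one_mul_cos_half u

lemma hasDerivAt_exp_mul_ofReal (a : ℂ) (u : ℝ) :
    HasDerivAt (fun u : ℝ => exp (a * u)) (a * exp (a * u)) u := by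
  simpa [mul_comm] using ((hasDerivAt_id u).ofReal_comp.const_mul a).cexp

lemma hasDerivAt_exp_I_mul_div {k : ℕ} (hk : k ≠ 0) (u : ℝ) :
    HasDerivAt (fun u : ℝ => exp (I * k * u) / k) (I * exp (I * k * u)) u := by
  have hk' : (k : ℂ) ≠ 0 := by exact_mod_cast hk
  refine ((hasDerivAt_exp_mul_ofReal (I * k) u).div_const (k : ℂ)).congr_deriv ?_
  field_simp

lemma hasDerivAt_sin_half (u : ℝ) :
    HasDerivAt (fun u : ℝ => (Real.sin (u / 2) : ℂ)) (Real.cos (u / 2) / 2) u :=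
  ((Real.hasDerivAt_sin _).comp u ((hasDerivAt_id u).div_const 2)).ofReal_comp.congr_deriv
    (by simp only [id, ofReal_mul, ofReal_div, ofReal_one, ofReal_ofNat]; ring)

lemma hasDerivAt_cos_half (u : ℝ) :
    HasDerivAt (fun u : ℝ => (Real.cos (u / 2) : ℂ)) (-Real.sin (u / 2) / 2) u :=
  ((Real.hasDerivAt_cos _).comp u ((hasDerivAt_id u).div_const 2)).ofReal_comp.congr_deriv
    (by simp only [id, ofReal_mul, ofReal_div, ofReal_one, ofReal_ofNat, ofReal_neg]; ring)

lemma hasDerivAt_log_sin_half {u : ℝ} (hs : Real.sin (u / 2) ≠ 0) :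
    HasDerivAt (fun u : ℝ => (Real.log (Real.sin (u / 2)) : ℂ))
      ((Real.cos (u / 2) : ℂ) / Real.sin (u / 2) / 2) u := by
  have := (Real.hasDerivAt_log hs).comp u
    ((Real.hasDerivAt_sin _).comp u ((hasDerivAt_id u).div_const 2))
  exact this.ofReal_comp.congr_deriv
    (by simp only [id, ofReal_mul, ofReal_inv, ofReal_div, ofReal_one, ofReal_ofNat]; ring)

noncomputable def boundaryTerm (m : ℕ) (u : ℝ) : ℂ :=
  -(exp (I * m * u) / (Real.sin (u / 2) : ℂ) ^ 2)
    - 2 * I * m * exp (I * m * u) * ((Real.cos (u / 2) : ℂ) / Real.sin (u / 2))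

noncomputable def trigPolyPrimitive (m : ℕ) (u : ℝ) : ℂ :=
  I * u + exp (I * m * u) / m + 2 * ∑ k ∈ Finset.Ico 1 m, exp (I * k * u) / k

-- `Real.log x = Real.log |x|`, so this is a primitive on every interval where `sin (u/2) ≠ 0`.
noncomputable def kernelPrimitive (m : ℕ) (u : ℝ) : ℂ :=
  boundaryTerm m u - 2 * m ^ 2 * (2 * Real.log (Real.sin (u / 2)) + trigPolyPrimitive m u)

lemma hasDerivAt_boundaryTerm (m : ℕ) {u : ℝ} (hs : Real.sin (u / 2) ≠ 0) :
    HasDerivAt (boundaryTerm m)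
      ((Real.cos (u / 2) : ℂ) / Real.sin (u / 2) ^ 3 * exp (I * m * u)
        + 2 * m ^ 2 * ((Real.cos (u / 2) : ℂ) / Real.sin (u / 2)) * exp (I * m * u)) u := by
  have hs' : (Real.sin (u / 2) : ℂ) ≠ 0 := by exact_mod_cast hs
  have hpyth : (Real.sin (u / 2) : ℂ) ^ 2 + (Real.cos (u / 2) : ℂ) ^ 2 = 1 := by
    exact_mod_cast Real.sin_sq_add_cos_sq (u / 2)
  have hE := hasDerivAt_exp_mul_ofReal (I * m) u
  have := ((hE.div ((hasDerivAt_sin_half u).pow 2) (pow_ne_zero 2 hs')).neg.sub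
    ((hE.const_mul (2 * I * m)).mul ((hasDerivAt_cos_half u).div (hasDerivAt_sin_half u) hs')))
  refine this.congr_deriv ?_
  simp only [Pi.pow_apply, Pi.div_apply, Nat.cast_ofNat]
  field_simp
  linear_combination (-2 * m ^ 2 * Real.sin (u / 2) ^ 3 * Real.cos (u / 2) : ℂ) * I_sq
    + (I * m * Real.sin (u / 2) ^ 2 : ℂ) * hpyth

lemma hasDerivAt_trigPolyPrimitive {m : ℕ} (hm : m ≠ 0) (u : ℝ) :
    HasDerivAt (trigPolyPrimitive m)
      (I * (1 + exp (I * m * u) + 2 * ∑ k ∈ Finset.Ico 1 m, exp (I * k * u))) u := by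
  have hsum : HasDerivAt (fun u : ℝ => ∑ k ∈ Finset.Ico 1 m, exp (I * k * u) / k)
      (∑ k ∈ Finset.Ico 1 m, I * exp (I * k * u)) u :=
    HasDerivAt.fun_sum fun k hk =>
      hasDerivAt_exp_I_mul_div (Nat.one_le_iff_ne_zero.mp (Finset.mem_Ico.mp hk).1) u
  have := (((hasDerivAt_id u).ofReal_comp.const_mul I).add
    (hasDerivAt_exp_I_mul_div hm u)).add (hsum.const_mul 2)
  refine this.congr_deriv ?_
  rw [← Finset.mul_sum, ofReal_one]
  ring

lemma hasDerivAt_kernelPrimitive (m : ℕ) {u : ℝ} (hs : Real.sin (u / 2) ≠ 0) :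
    HasDerivAt (kernelPrimitive m)
      (((Real.cos (u / 2) / Real.sin (u / 2) ^ 3 : ℝ) : ℂ) * exp (I * m * u)) u := by
  rcases Nat.eq_zero_or_pos m with rfl | hm
  · have h : kernelPrimitive 0 = boundaryTerm 0 := by
      ext
      simp [kernelPrimitive]
    rw [h]
    simpa using hasDerivAt_boundaryTerm 0 hs
  have hs' : (Real.sin (u / 2) : ℂ) ≠ 0 := by exact_mod_cast hs
  have := (hasDerivAt_boundaryTerm m hs).sub
    ((((hasDerivAt_log_sin_half hs).const_mul 2).add
      (hasDerivAt_trigPolyPrimitive hm.ne' u)).const_mul (2 * m ^ 2 : ℂ))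
  refine this.congr_deriv ?_
  rw [ofReal_div, ofReal_pow]
  linear_combination (2 * m ^ 2 / Real.sin (u / 2) : ℂ) * cos_half_mul_exp_sub_one hm u
    + (2 * m ^ 2 * I * (1 + exp (I * m * u) + 2 * ∑ k ∈ Finset.Ico 1 m, exp (I * k * u))) *
      mul_inv_cancel₀ hs'

lemma exp_I_mul_add_two_pi (k : ℕ) (u : ℝ) :
    exp (I * k * ↑(u + 2 * π)) = exp (I * k * u) := by
  rw [show I * k * ↑(u + 2 * π) = I * k * u + k * (2 * π * I) by push_cast; ring,
    Complex.exp_add, exp_nat_mul_two_pi_mul_I, mul_one]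

lemma kernelPrimitive_add_two_pi_sub (m : ℕ) (u : ℝ) :
    kernelPrimitive m (u + 2 * π) - kernelPrimitive m u = -4 * π * I * m ^ 2 := by
  have hhalf : (u + 2 * π) / 2 = u / 2 + π := by ring
  simp only [kernelPrimitive, boundaryTerm, trigPolyPrimitive, exp_I_mul_add_two_pi, hhalf,
    Real.sin_add_pi, Real.cos_add_pi, Real.log_neg_eq_log, ofReal_neg, neg_sq, neg_div_neg_eq]
  push_cast
  ring

lemma boundaryTerm_neg_sub (m : ℕ) (ε : ℝ) :
    boundaryTerm m (-ε) - boundaryTerm m ε = 2 * I * ((Real.sin (m * ε) / Real.sin (ε / 2) ^ 2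
      + 2 * m * Real.cos (m * ε) * Real.cos (ε / 2) / Real.sin (ε / 2) : ℝ) : ℂ) := by
  have hexp (x : ℝ) : exp (I * m * x) = Real.cos (m * x) + Real.sin (m * x) * I := by
    rw [show I * m * x = ((m * x : ℝ) : ℂ) * I by push_cast; ring, exp_mul_I]
    push_cast
    rfl
  rw [boundaryTerm, boundaryTerm, hexp, hexp]
  simp only [mul_neg, Real.cos_neg, Real.sin_neg, neg_div, ofReal_neg, ofReal_add, ofReal_div,
    ofReal_mul, ofReal_pow, ofReal_natCast, ofReal_ofNat]
  ring

lemma tendsto_kernelPrimitive_neg_sub (m : ℕ) :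
    Tendsto (fun ε => kernelPrimitive m (-ε) - kernelPrimitive m ε - 16 * I * m / ε)
      (𝓝[>] 0) (𝓝 0) := by
  have hsing := (continuous_ofReal.tendsto 0).comp (tendsto_sin_mul_div_sin_half_sq_add_sub m)
  have hreg : Tendsto (fun ε => trigPolyPrimitive m (-ε) - trigPolyPrimitive m ε)
      (𝓝[>] 0) (𝓝 0) := by
    have hc : Continuous fun ε => trigPolyPrimitive m (-ε) - trigPolyPrimitive m ε := by
      unfold trigPolyPrimitive
      fun_prop
    exact (hc.tendsto' 0 0 (by simp)).mono_left nhdsWithin_le_nhds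
  convert (hsing.const_mul (2 * I)).sub (hreg.const_mul (2 * m ^ 2 : ℂ)) using 1
  · ext ε
    have := boundaryTerm_neg_sub m ε
    simp only [kernelPrimitive, Function.comp_apply, Real.log_neg_eq_log, neg_div,
      Real.sin_neg] at this ⊢
    push_cast at this ⊢
    linear_combination this
  · simp

noncomputable def truncatedIntegral (m : ℤ) (t ε : ℝ) : ℂ :=
  ∫ x in Icc (-π) π \ Ioo (t - ε) (t + ε),
    ((Real.cos ((x - t) / 2) / Real.sin ((x - t) / 2) ^ 3 : ℝ) : ℂ) * exp (I * m * x)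

lemma tendsto_truncatedIntegral_of_nonneg {m : ℤ} (hm : 0 ≤ m) {t : ℝ} (ht : t ∈ Ioo (-π) π) :
    Tendsto (fun ε : ℝ => truncatedIntegral m t ε - 16 * I * m * exp (I * m * t) / ε) (𝓝[>] 0)
      (𝓝 (-4 * π * I * m ^ 2 * exp (I * m * t))) := by
  lift m to ℕ using hm
  simp only [Int.cast_natCast]
  obtain ⟨ht₁, ht₂⟩ := ht
  set f : ℝ → ℂ := fun x =>
    ((Real.cos ((x - t) / 2) / Real.sin ((x - t) / 2) ^ 3 : ℝ) : ℂ) * exp (I * m * x)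
  have hF {x : ℝ} (hs : Real.sin ((x - t) / 2) ≠ 0) :
      HasDerivAt (fun x => exp (I * m * t) * kernelPrimitive m (x - t)) (f x) x := by
    refine ((hasDerivAt_kernelPrimitive m hs).comp_sub_const x t).const_mul _ |>.congr_deriv ?_
    rw [mul_left_comm, ← Complex.exp_add]
    congr 2
    push_cast
    ring
  have hf {x : ℝ} (hs : Real.sin ((x - t) / 2) ≠ 0) : ContinuousAt f x := by
    have : Real.sin ((x - t) / 2) ^ 3 ≠ 0 := pow_ne_zero 3 hs
    fun_prop (disch := assumption)
  have hperiod := kernelPrimitive_add_two_pi_sub m (-π - t)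
  rw [show -π - t + 2 * π = π - t by ring] at hperiod
  have hlim := ((tendsto_kernelPrimitive_neg_sub m).const_mul (exp (I * m * t))).const_add
    (exp (I * m * t) * (-4 * π * I * m ^ 2))
  rw [mul_zero, add_zero, mul_comm] at hlim
  refine hlim.congr' ?_
  filter_upwards [Ioo_mem_nhdsGT (lt_min (sub_pos.2 ht₂) (neg_lt_iff_pos_add.1 ht₁))]
    with ε ⟨hε, hεδ⟩
  have hε₁ := hεδ.trans_le (min_le_left _ _)
  have hε₂ := hεδ.trans_le (min_le_right _ _)
  have hs : ∀ x ∈ Icc (-π) (t - ε) ∪ Icc (t + ε) π, Real.sin ((x - t) / 2) ≠ 0 := by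
    rintro x (⟨hx₁, hx₂⟩ | ⟨hx₁, hx₂⟩) <;>
      exact Real.sin_half_ne_zero (by linarith) (by linarith) (by linarith)
  have hint : truncatedIntegral m t ε = _ :=
    setIntegral_Icc_diff_Ioo_eq_sub (f := f) (by linarith) (by linarith) (by linarith)
      (fun x hx => hF (hs x hx)) (fun x hx => (hf (hs x hx)).continuousWithinAt)
  rw [hint, show t - ε - t = -ε by ring, show t + ε - t = ε by ring]
  linear_combination (-exp (I * m * t)) * hperiod

lemma conj_exp_I_mul_neg_intCast (m : ℤ) (x : ℝ) :
    conj (exp (I * ↑(-m) * x)) = exp (I * m * x) := by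
  rw [← Complex.exp_conj]
  simp

lemma conj_truncatedIntegral_neg (m : ℤ) (t ε : ℝ) :
    conj (truncatedIntegral (-m) t ε) = truncatedIntegral m t ε := by
  simp only [truncatedIntegral, ← integral_conj, map_mul, conj_ofReal, conj_exp_I_mul_neg_intCast]

lemma tendsto_truncatedIntegral (m : ℤ) {t : ℝ} (ht : t ∈ Ioo (-π) π) :
    Tendsto (fun ε : ℝ => truncatedIntegral m t ε - 16 * I * m * exp (I * m * t) / ε) (𝓝[>] 0)
      (𝓝 (-4 * π * I * ((|m| * m : ℤ) : ℂ) * exp (I * m * t))) := by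
  rcases le_or_gt 0 m with hm | hm
  · simpa [abs_of_nonneg hm, sq] using tendsto_truncatedIntegral_of_nonneg hm ht
  have H := (continuous_conj.tendsto _).comp
    (tendsto_truncatedIntegral_of_nonneg (neg_nonneg.2 hm.le) ht)
  simp only [Function.comp_def, map_sub, map_div₀, map_mul, map_neg, map_pow,
    conj_truncatedIntegral_neg, conj_exp_I_mul_neg_intCast, conj_I, conj_ofReal, map_ofNat,
    map_intCast] at H
  convert H using 2
  · push_cast
    ring
  · rw [abs_of_neg hm]
    push_cast
    ring

end FinitePart

theorem stmt_16 (m : ℤ) (t : ℝ) (ht : t ∈ Set.Ioo (-π) π) :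
    Tendsto (fun ε : ℝ =>
        (∫ x in Set.Icc (-π) π \ Set.Ioo (t - ε) (t + ε),
            ((Real.cos ((x - t) / 2) / Real.sin ((x - t) / 2) ^ 3 : ℝ) : ℂ) *
              Complex.exp (Complex.I * m * x))
          - 16 * Complex.I * m * Complex.exp (Complex.I * m * t) / (ε : ℂ))
      (nhdsWithin 0 (Set.Ioi 0))
      (nhds (-(Int.sign m : ℂ) * 4 * π * Complex.I * (m : ℂ) ^ 2 *
        Complex.exp (Complex.I * m * t))) := by
  have hsign : -(Int.sign m : ℂ) * 4 * π * I * (m : ℂ) ^ 2 = -4 * π * I * ((|m| * m : ℤ) : ℂ) := by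
    rw [← Int.sign_mul_self_eq_abs]
    push_cast
    ring
  rw [hsign]
  exact FinitePart.tendsto_truncatedIntegral m ht
end
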